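/- arXiv:1904.08774 — 3 statements merged into one kernel-verified Lean document; each statement's English description precedes it below -/
import Mathlib

section
/- Let C be a linear [n,k] code over F_{q^m} with parity-check matrix H, and let E ∈ F_{q^m}^{ℓ×n} have F_q-rank t < n−k. Let S = H·Eᵀ, let P be invertible over F_{q^m} with P·S in row echelon form, and let H_sub consist of the rows of P·H corresponding to zero rows of P·S. Then the F_{q^m}-row space of H_sub equals (ker_{F_{q^m}} E) ∩ C^⊥, where ker_{F_{q^m}} E = {v ∈ F_{q^m}^n : E·vᵀ = 0} and C^⊥ is the dual code (the F_{q^m}-row space of H). -/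
open Matrix

noncomputable def extM {K L : Type} [Field K] [Field L] [Algebra K L]
    {m n : ℕ} {ι : Type} (γ : Module.Basis (Fin m) K L) (E : Matrix ι (Fin n) L) :
    Matrix (ι × Fin m) (Fin n) K :=
  Matrix.of fun p j => γ.repr (E p.1 j) p.2

/-- `M` is in row echelon form: for any nonzero entry of a lower row, every higher row has a
nonzero entry strictly to the left (so pivots move strictly right, zero rows are at the
bottom). -/
def IsRowEchelon {R : Type} [Zero R] {r c : ℕ} (M : Matrix (Fin r) (Fin c) R) : Prop :=
  ∀ i₁ i₂ : Fin r, i₁ < i₂ → ∀ j₂ : Fin c, M i₂ j₂ ≠ 0 → ∃ j₁ : Fin c, j₁ < j₂ ∧ M i₁ j₁ ≠ 0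

/-!
Write `S = (P H) Eᵀ`. Every row of `P H` is mapped by `E` to the corresponding row of `S`, so
the rows of `P H` over zero rows of `S` lie in `ker E`, and they lie in the row space of `H`
because `P` is invertible. Conversely, a vector `v = d (P H)` of the row space with `E v = 0`
gives `d S = 0`; the nonzero rows of an echelon matrix are linearly independent, so `d`
vanishes on them and `v` is a combination of the rows of `P H` over zero rows of `S`.
-/

theorem IsRowEchelon.matrix_isRowEchelon {R : Type} [Zero R] {r c : ℕ}
    {M : Matrix (Fin r) (Fin c) R} (hM : _root_.IsRowEchelon M) : M.IsRowEchelon := by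
  intro i₁ i₂ hlt j₂ hleft
  by_contra hne
  obtain ⟨j₁, hj₁, hne₁⟩ := hM i₁ i₂ hlt j₂ hne
  exact hne₁ (hleft j₁ hj₁)

namespace Matrix

theorem IsRowEchelon.eq_zero_of_vecMul_eq_zero {R l m : Type*} [Semiring R] [NoZeroDivisors R]
    [Fintype m] [LinearOrder m] [WellFoundedLT m] [LT l] [WellFoundedLT l]
    {A : Matrix m l R} (hA : A.IsRowEchelon) {v : m → R} (hv : v ᵥ* A = 0) :
    ∀ i, A i ≠ 0 → v i = 0 := by
  intro i
  induction i using WellFoundedLT.induction with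
  | ind i ih =>
    intro hi
    obtain ⟨c, hc⟩ := row_ne_zero_iff_exists_isLeadingEntry.mp hi
    -- rows above `i` have zero coefficient by induction, rows below vanish at the leading column
    have hcol : (v ᵥ* A) c = v i * A i c := by
      refine Finset.sum_eq_single i (fun i' _ hne => ?_) (by simp)
      rcases lt_or_gt_of_ne hne with hlt | hgt
      · by_cases hrow : A i' = 0
        · simp [hrow]
        · simp [ih i' hlt hrow]
      · simp [hA hgt hc.1]
    rw [hv] at hcol
    exact (mul_eq_zero.mp hcol.symm).resolve_right hc.2

theorem span_range_mul_le {R l m n : Type*} [Semiring R] [Fintype m] (P : Matrix l m R)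
    (H : Matrix m n R) :
    Submodule.span R (Set.range (P * H)) ≤ Submodule.span R (Set.range H) := by
  rw [Submodule.span_le]
  rintro _ ⟨i, rfl⟩
  rw [mul_apply_eq_vecMul, vecMul_eq_sum]
  exact Submodule.sum_mem _ fun j _ => Submodule.smul_mem _ _ (Submodule.subset_span ⟨j, rfl⟩)

theorem span_range_mul_of_isUnit {R m n : Type*} [Semiring R] [Fintype m] [DecidableEq m]
    {P : Matrix m m R} (hP : IsUnit P) (H : Matrix m n R) :
    Submodule.span R (Set.range (P * H)) = Submodule.span R (Set.range H) := by
  obtain ⟨B, hB⟩ := hP.exists_left_inv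
  refine (span_range_mul_le P H).antisymm ?_
  simpa only [← Matrix.mul_assoc, hB, Matrix.one_mul] using span_range_mul_le B (P * H)

theorem IsRowEchelon.span_range_eq_ker_inf_span_range {R l m n : Type*} [CommSemiring R]
    [NoZeroDivisors R] [Fintype m] [LinearOrder m] [WellFoundedLT m] [LT l] [WellFoundedLT l]
    [Fintype n] {A : Matrix m n R} {E : Matrix l n R} (hAE : (A * Eᵀ).IsRowEchelon) :
    Submodule.span R (Set.range fun i : {i // (A * Eᵀ) i = 0} => A i) =
      LinearMap.ker E.mulVecLin ⊓ Submodule.span R (Set.range A) := by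
  have hrow (i : m) : E *ᵥ A i = (A * Eᵀ) i := by rw [mul_apply_eq_vecMul, vecMul_transpose]
  apply le_antisymm
  · rw [Submodule.span_le]
    rintro _ ⟨i, rfl⟩
    exact ⟨by simpa [hrow] using i.2, Submodule.subset_span ⟨i, rfl⟩⟩
  · rintro _ ⟨hker, hspan⟩
    obtain ⟨d, rfl⟩ := (Submodule.mem_span_range_iff_exists_fun R).mp hspan
    have hd : d ᵥ* (A * Eᵀ) = 0 := by
      rw [← vecMul_vecMul, vecMul_transpose, vecMul_eq_sum]
      exact hker
    refine Submodule.sum_mem _ fun i _ => ?_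
    by_cases hi : (A * Eᵀ) i = 0
    · exact Submodule.smul_mem _ _ (Submodule.subset_span ⟨⟨i, hi⟩, rfl⟩)
    · simp [hAE.eq_zero_of_vecMul_eq_zero hd i hi]

end Matrix

theorem span_Hsub_eq_ker_inter_dual_general {n k ℓ : ℕ} (L : Type) [Field L]
    (H : Matrix (Fin (n - k)) (Fin n) L)
    (E : Matrix (Fin ℓ) (Fin n) L)
    (P : Matrix (Fin (n - k)) (Fin (n - k)) L) (hP : IsUnit P)
    (hech : _root_.IsRowEchelon (P * (H * Eᵀ))) :
    Submodule.span L
        (Set.range (fun i : {i : Fin (n - k) // (P * (H * Eᵀ)) i = 0} => (P * H) i.1)) =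
      LinearMap.ker E.mulVecLin ⊓ Submodule.span L (Set.range H) := by
  have hS := hech.matrix_isRowEchelon
  rw [← Matrix.mul_assoc] at hS ⊢
  rw [hS.span_range_eq_ker_inf_span_range, span_range_mul_of_isUnit hP]

/-- if `H` is a (full-rank) parity-check matrix of the `[n,k]` code `C` over
`F_{q^m}`, `E` has `F_q`-rank `t < n-k`, `S = H·Eᵀ`, `P` is invertible with `P·S` in row
echelon form, and `H_sub` consists of the rows of `P·H` corresponding to the zero rows of
`P·S`, then the `F_{q^m}`-row space of `H_sub` equals `ker_{F_{q^m}}(E) ∩ C^⊥`, where `C^⊥`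
is the row space of `H`. -/
theorem span_Hsub_eq_ker_inter_dual {q m n k ℓ t : ℕ} (K L : Type) [Field K] [Fintype K]
    [Field L] [Fintype L] [Algebra K L] (hK : Fintype.card K = q) (hL : Fintype.card L = q ^ m)
    (γ : Module.Basis (Fin m) K L)
    (H : Matrix (Fin (n - k)) (Fin n) L) (C : Submodule L (Fin n → L))
    (hC : ∀ v, v ∈ C ↔ H.mulVec v = 0) (hH : H.rank = n - k)
    (E : Matrix (Fin ℓ) (Fin n) L) (hE : (extM γ E).rank = t) (ht : t < n - k)
    (P : Matrix (Fin (n - k)) (Fin (n - k)) L) (hP : IsUnit P)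
    (hech : _root_.IsRowEchelon (P * (H * Eᵀ))) :
    Submodule.span L
        (Set.range (fun i : {i : Fin (n - k) // (P * (H * Eᵀ)) i = 0} => (P * H) i.1)) =
      LinearMap.ker E.mulVecLin ⊓ Submodule.span L (Set.range H) :=
  span_Hsub_eq_ker_inter_dual_general L H E P hP hech
end

section
/- Let C be an F_{q^m}-linear [n,k] rank-metric code with minimum rank distance d, and let C' ⊆ F_{q^{mℓ}}^n be obtained by identifying ℓ-tuples of codewords of C (stacked as an ℓ×n matrix over F_{q^m}) with vectors over F_{q^{mℓ}} via a fixed F_{q^m}-basis of F_{q^{mℓ}}. Then C' is an F_{q^{mℓ}}-linear code of length n, dimension k over F_{q^{mℓ}}, and minimum rank distance d (with rank taken over F_q). -/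
/-!
Expanding every entry of `v ∈ M^n` in the basis `β` splits `v` into `ℓ` rows in `L^n`, and this is
an `L`-linear isomorphism between `C'` and `C^ℓ`; the tower law `[M : L] = ℓ` then turns
`dim_L C' = ℓ k` into `dim_M C' = k`. Each row is the image of `v` under the `K`-linear coordinate
map `M → L`, so its rank weight is at most that of `v`, and a nonzero `v` has a nonzero row: hence
the weight of `v` is at least `d`. Conversely a codeword of `C` of weight `d`, viewed in `M^n`
through the `K`-linear embedding `L → M`, is a codeword of `C'` of the same weight.
-/

open Matrix Module Submodule

noncomputable section

section RankWeight

variable (K : Type*) {V W ι : Type*} [DivisionRing K] [AddCommGroup V] [Module K V]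
  [AddCommGroup W] [Module K W]

def rankWeight (v : ι → V) : ℕ := finrank K (span K (Set.range v))

variable {K}

theorem rankWeight_comp_le [Finite ι] (f : V →ₗ[K] W) (v : ι → V) :
    rankWeight K (f ∘ v) ≤ rankWeight K v := by
  have := FiniteDimensional.span_of_finite K (Set.finite_range v)
  rw [rankWeight, Set.range_comp, ← map_span]
  exact finrank_map_le f _

theorem rankWeight_comp_of_injective (f : V →ₗ[K] W) (hf : Function.Injective f) (v : ι → V) :
    rankWeight K (f ∘ v) = rankWeight K v := by
  rw [rankWeight, Set.range_comp, ← map_span]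
  exact (equivMapOfInjective f hf _).finrank_eq.symm

end RankWeight

theorem Submodule.finrank_pi_univ_const {R N κ : Type*} [DivisionRing R] [AddCommGroup N]
    [Module R N] [Fintype κ] (p : Submodule R N) [Module.Finite R p] :
    finrank R (pi Set.univ fun _ : κ => p) = Fintype.card κ * finrank R p := by
  have hinj : Function.Injective (p.subtype.compLeft κ) := fun x y h =>
    funext fun i => p.subtype_injective (congrFun h i)
  have hrange : pi Set.univ (fun _ : κ => p) = LinearMap.range (p.subtype.compLeft κ) := by
    rw [LinearMap.range_compLeft, p.range_subtype]
  rw [hrange, LinearMap.finrank_range_of_inj hinj,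
    finrank_pi_fintype, Finset.sum_const, Finset.card_univ, smul_eq_mul]

theorem Module.Basis.repr_mul_apply {L M κ : Type*} [CommSemiring L] [Semiring M] [Algebra L M]
    [Fintype κ] (β : Basis κ L M) (c x : M) (i : κ) :
    β.repr (c * x) i = ∑ i', β.repr (c * β i') i * β.repr x i' := by
  conv_lhs => rw [← β.sum_repr x, Finset.mul_sum]
  simp [mul_comm]

section Rows

variable {L M ι κ : Type*} [Semiring L] [AddCommMonoid M] [Module L M] [Finite κ]

def Module.Basis.rowsEquiv (β : Basis κ L M) (ι : Type*) : (ι → M) ≃ₗ[L] (κ → ι → L) :=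
  (LinearEquiv.piCongrRight fun _ : ι => β.equivFun).trans
    { Equiv.piComm fun (_ : ι) (_ : κ) => L with map_add' _ _ := rfl, map_smul' _ _ := rfl }

@[simp]
theorem Module.Basis.rowsEquiv_apply (β : Basis κ L M) (v : ι → M) (i : κ) (j : ι) :
    β.rowsEquiv ι v i j = β.repr (v j) i := rfl

theorem Module.Basis.exists_rowsEquiv_ne_zero (β : Basis κ L M) {v : ι → M} (hv : v ≠ 0) :
    ∃ i, β.rowsEquiv ι v i ≠ 0 := by
  by_contra! h
  exact hv ((β.rowsEquiv ι).map_eq_zero_iff.mp (funext h))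

end Rows

section Interleaving

variable {L M ι κ : Type*} [Field L] [Field M] [Algebra L M] [Fintype κ]

variable (β : Basis κ L M) (C : Submodule L (ι → L))

def interleavedCode : Submodule M (ι → M) where
  carrier := {v | ∀ i, β.rowsEquiv ι v i ∈ C}
  add_mem' hv hw i := by rw [map_add]; exact C.add_mem (hv i) (hw i)
  zero_mem' i := by rw [map_zero]; exact C.zero_mem
  smul_mem' c v hv i := by
    have hrow : β.rowsEquiv ι (c • v) i = ∑ i', β.repr (c * β i') i • β.rowsEquiv ι v i' := by
      ext j
      simp only [Basis.rowsEquiv_apply, Pi.smul_apply, smul_eq_mul, Finset.sum_apply]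
      exact β.repr_mul_apply c (v j) i
    rw [hrow]
    exact sum_mem fun i' _ => C.smul_mem _ (hv i')

theorem mem_interleavedCode {v : ι → M} :
    v ∈ interleavedCode β C ↔ ∀ i, (fun j => β.repr (v j) i) ∈ C := Iff.rfl

theorem restrictScalars_interleavedCode :
    (interleavedCode β C).restrictScalars L = (pi Set.univ fun _ => C).comap (β.rowsEquiv ι).toLinearMap := by
  ext v
  simp only [restrictScalars_mem, mem_comap, mem_pi, Set.mem_univ, true_imp_iff]
  rfl

theorem finrank_interleavedCode [Finite ι] : finrank M (interleavedCode β C) = finrank L C := by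
  have hfinrankL : finrank L (interleavedCode β C) = Fintype.card κ * finrank L C := by
    calc finrank L (interleavedCode β C)
        = finrank L ((interleavedCode β C).restrictScalars L) := rfl
      _ = finrank L (pi Set.univ fun _ : κ => C) := by
        rw [restrictScalars_interleavedCode]
        exact ((β.rowsEquiv ι).ofSubmodule' _).finrank_eq
      _ = Fintype.card κ * finrank L C := finrank_pi_univ_const C
  have htower := finrank_mul_finrank L M (interleavedCode β C)
  rw [finrank_eq_card_basis β, hfinrankL] at htower
  exact Nat.eq_of_mul_eq_mul_left (Fintype.card_pos_iff.mpr β.index_nonempty) htower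

variable {β C}

theorem algebraMap_comp_mem_interleavedCode {v : ι → L} (hv : v ∈ C) :
    algebraMap L M ∘ v ∈ interleavedCode β C := by
  intro i
  have hrow : β.rowsEquiv ι (algebraMap L M ∘ v) i = β.repr 1 i • v := by
    ext j
    simp [Algebra.algebraMap_eq_smul_one, mul_comm]
  rw [hrow]
  exact C.smul_mem _ hv

variable (K : Type*) [Field K] [Algebra K L] [Algebra K M] [IsScalarTower K L M]

theorem rankWeight_rowsEquiv_le [Finite ι] (v : ι → M) (i : κ) :
    rankWeight K (β.rowsEquiv ι v i) ≤ rankWeight K v :=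
  rankWeight_comp_le ((β.coord i).restrictScalars K) v

theorem rankWeight_algebraMap_comp (v : ι → L) :
    rankWeight K (algebraMap L M ∘ v) = rankWeight K v :=
  rankWeight_comp_of_injective ((Algebra.linearMap L M).restrictScalars K)
    (algebraMap L M).injective v

variable {K}

theorem le_rankWeight_of_mem_interleavedCode [Finite ι] {d : ℕ}
    (hd : ∀ w ∈ C, w ≠ 0 → d ≤ rankWeight K w) {v : ι → M} (hv : v ∈ interleavedCode β C)
    (hv0 : v ≠ 0) : d ≤ rankWeight K v := by
  obtain ⟨i, hi⟩ := β.exists_rowsEquiv_ne_zero hv0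
  exact (hd _ (hv i) hi).trans (rankWeight_rowsEquiv_le K v i)

end Interleaving

end

theorem interleaved_as_linear_code_general {n k d ℓ : ℕ}
    (K L M : Type) [Field K] [Field L] [Field M]
    [Algebra K L] [Algebra L M] [Algebra K M] [IsScalarTower K L M]
    (β : Basis (Fin ℓ) L M)
    (C : Submodule L (Fin n → L)) (hk : finrank L C = k)
    (hd : ∀ v ∈ C, v ≠ 0 → d ≤ finrank K (span K (Set.range v)))
    (hd' : ∃ v ∈ C, v ≠ 0 ∧ finrank K (span K (Set.range v)) = d) :
    ∃ C' : Submodule M (Fin n → M),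
      (∀ v : Fin n → M, v ∈ C' ↔ ∀ i : Fin ℓ, (fun j => β.repr (v j) i) ∈ C) ∧
      finrank M C' = k ∧
      (∀ v ∈ C', v ≠ 0 → d ≤ finrank K (span K (Set.range v))) ∧
      (∃ v ∈ C', v ≠ 0 ∧ finrank K (span K (Set.range v)) = d) := by
  refine ⟨interleavedCode β C, fun v => mem_interleavedCode β C,
    (finrank_interleavedCode β C).trans hk, fun v => le_rankWeight_of_mem_interleavedCode hd, ?_⟩
  obtain ⟨v, hvC, hv0, hvd⟩ := hd'
  refine ⟨algebraMap L M ∘ v, algebraMap_comp_mem_interleavedCode hvC, fun h => hv0 ?_,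
    (rankWeight_algebraMap_comp K v).trans hvd⟩
  exact funext fun j => by simpa using congrFun h j

/-- let `C` be an `F_{q^m}`-linear `[n,k]` rank-metric code with minimum rank
distance `d` (rank weight of `v` = `dim_{F_q}` of the `F_q`-span of the entries of `v`).
Identifying `ℓ`-tuples of codewords of `C` with vectors over the degree-`ℓ` extension
`F_{q^{mℓ}}` via a fixed basis `β` of `F_{q^{mℓ}}/F_{q^m}`, one obtains an
`F_{q^{mℓ}}`-linear code `C'` of length `n`, dimension `k`, and minimum rank distance `d`
(rank again taken over `F_q`). -/
theorem interleaved_as_linear_code {q m n k d ℓ : ℕ}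
    (K L M : Type) [Field K] [Fintype K] [Field L] [Fintype L] [Field M] [Fintype M]
    [Algebra K L] [Algebra L M] [Algebra K M] [IsScalarTower K L M]
    (hK : Fintype.card K = q) (hL : Fintype.card L = q ^ m) (hM : Fintype.card M = q ^ (m * ℓ))
    (β : Basis (Fin ℓ) L M)
    (C : Submodule L (Fin n → L)) (hk : finrank L C = k)
    (hd : ∀ v ∈ C, v ≠ 0 → d ≤ finrank K (span K (Set.range v)))
    (hd' : ∃ v ∈ C, v ≠ 0 ∧ finrank K (span K (Set.range v)) = d) :
    ∃ C' : Submodule M (Fin n → M),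
      (∀ v : Fin n → M, v ∈ C' ↔ ∀ i : Fin ℓ, (fun j => β.repr (v j) i) ∈ C) ∧
      finrank M C' = k ∧
      (∀ v ∈ C', v ≠ 0 → d ≤ finrank K (span K (Set.range v))) ∧
      (∃ v ∈ C', v ≠ 0 ∧ finrank K (span K (Set.range v)) = d) :=
  interleaved_as_linear_code_general K L M β C hk hd hd'
end

section
/- Let C be a linear [n,k,d] rank-metric code over F_{q^m} with parity-check matrix H, and let E ∈ F_{q^m}^{ℓ×n} have rank support with basis matrix B ∈ F_q^{t×n} and satisfy rank_{F_{q^m}}(E) = t. Suppose that for every b ∈ F_q^n not in the F_q-row space of B, the matrix H·[Bᵀ | bᵀ] has F_{q^m}-rank t+1. Then the F_q-row space of the expanded matrix ext_γ(H_sub) equals ker_{F_q}(B), where H_sub is defined from S = H·Eᵀ as the rows of P·H corresponding to zero rows of a row-echelon form P·S. (This generalizes the t ≤ d−2 condition.) -/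
open Matrix

/-
Since `rank E = t`, the `L`-row space of `E` is that of `B`, so a row `h` of `P·H` with
`h·Eᵀ = 0` is orthogonal to the rows of `B`; expanding over `γ`, the rows of `ext_γ(H_sub)`
lie in `ker B`. If they spanned less than `ker B`, a dimension count would give
`b ∈ ker ext_γ(H_sub)` outside the row space of `B`. Every row of `H_sub` then kills the columns
of `[Bᵀ | bᵀ]`, so `P·H·[Bᵀ | bᵀ]` lives on the nonzero rows of the echelon matrix `P·S`, which
number `rank S ≤ rank E = t`, against the assumed rank `t + 1`.
-/

open Submodule Set Finset

theorem isRowEchelon_iff_matrix_isRowEchelon {R : Type} [Zero R] {r c : ℕ}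
    {M : Matrix (Fin r) (Fin c) R} : _root_.IsRowEchelon M ↔ M.IsRowEchelon := by
  refine ⟨fun h i₁ i₂ hlt j₂ hzero => ?_, fun h i₁ i₂ hlt j₂ hne => ?_⟩
  · by_contra hne
    obtain ⟨j₁, hj₁, hne₁⟩ := h i₁ i₂ hlt j₂ hne
    exact hne₁ (hzero j₁ hj₁)
  · by_contra! hzero
    exact hne (h hlt hzero)

namespace Matrix.IsRowEchelon

variable {m n R : Type*} [LinearOrder m] [Fintype n] [LinearOrder n]

theorem isPivotedBy [Zero R] [DecidableEq R] {A : Matrix m n R} (h : A.IsRowEchelon) :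
    A.IsPivotedBy fun i => ({j | A i j ≠ 0} : Finset n).min := by
  refine ⟨h, fun i => ⟨fun j hj => ?_, fun j hj => ?_⟩⟩
  · by_contra hne
    exact (Finset.min_le (by simpa using hne)).not_gt hj
  · simpa using Finset.mem_of_min hj

variable [Fintype m] [CommRing R] [IsDomain R]

theorem rank_eq_card [DecidableEq R] {A : Matrix m n R} (h : A.IsRowEchelon) :
    A.rank = #{i | A.row i ≠ 0} := by
  rw [h.isPivotedBy.rank_eq]
  congr 1
  ext i
  simp only [Finset.mem_filter, Finset.mem_univ, true_and, ne_eq, h.isPivotedBy.eq_top_iff]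
  rfl

theorem rank_le_of_row_eq_zero {ι : Type*} [Fintype ι] {A : Matrix m n R} {M : Matrix m ι R}
    (hA : A.IsRowEchelon) (h : ∀ i, A i = 0 → M i = 0) : M.rank ≤ A.rank := by
  classical
  rw [hA.rank_eq_card]
  refine M.rank_le_card_of_support_subset _ fun i hi => ?_
  exact Finset.mem_filter.mpr ⟨Finset.mem_univ i, mt (h i) hi⟩

end Matrix.IsRowEchelon

section RowSpace

variable {R ι κ n : Type*} [Fintype n]

theorem span_row_le_ker_mulVecLin [CommSemiring R] {Y : Matrix ι n R} {B : Matrix κ n R}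
    (h : ∀ r, Y *ᵥ B r = 0) : span R (range Y) ≤ LinearMap.ker B.mulVecLin := by
  rw [span_le]
  rintro _ ⟨i, rfl⟩
  ext r
  simpa [mulVec, dotProduct_comm] using congrFun (h r) i

theorem dotProduct_eq_zero_of_mem_span_row [CommSemiring R] [Fintype κ] {E : Matrix κ n R}
    {v w : n → R} (hv : E *ᵥ v = 0) (hw : w ∈ span R (range E)) : v ⬝ᵥ w = 0 := by
  obtain ⟨c, rfl⟩ : w ∈ LinearMap.range E.vecMulLinear := by
    rw [range_vecMulLinear]
    exact hw
  rw [dotProduct_comm, vecMulLinear_apply, ← dotProduct_mulVec, hv, dotProduct_zero]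

theorem exists_mulVec_eq_zero_notMem_span_row [Field R] [Fintype ι] [Fintype κ]
    {Y : Matrix ι n R} {B : Matrix κ n R} (h : span R (range Y) < LinearMap.ker B.mulVecLin) :
    ∃ b, Y *ᵥ b = 0 ∧ b ∉ span R (range B) := by
  have hY := LinearMap.finrank_range_add_finrank_ker Y.mulVecLin
  have hB := LinearMap.finrank_range_add_finrank_ker B.mulVecLin
  have hlt := Submodule.finrank_lt_finrank_of_lt h
  have hYrow : Y.rank = Module.finrank R (span R (range Y)) := Y.rank_eq_finrank_span_row
  have hBrow : B.rank = Module.finrank R (span R (range B)) := B.rank_eq_finrank_span_row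
  rw [← Matrix.rank] at hY hB
  refine SetLike.not_le_iff_exists.mp fun hle : LinearMap.ker Y.mulVecLin ≤ span R (range B) => ?_
  have := Submodule.finrank_mono hle
  omega

end RowSpace

section Expansion

variable {K L : Type} [Field K] [Field L] [Algebra K L] {m n : ℕ} (γ : Module.Basis (Fin m) K L)

theorem extM_mulVec_apply {ι : Type} (X : Matrix ι (Fin n) L) (c : Fin n → K) (i : ι)
    (s : Fin m) :
    (extM γ X *ᵥ c) (i, s) = γ.repr ((X *ᵥ fun j => algebraMap K L (c j)) i) s := by
  simp only [extM, mulVec, dotProduct, of_apply, mul_comm (X i _), ← Algebra.smul_def, map_sum,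
    map_smul, Finsupp.coe_finsetSum, Finset.sum_apply, Finsupp.smul_apply, smul_eq_mul]
  exact Finset.sum_congr rfl fun _ _ => mul_comm _ _

theorem extM_mulVec_eq_zero_iff {ι : Type} (X : Matrix ι (Fin n) L) (c : Fin n → K) :
    extM γ X *ᵥ c = 0 ↔ X *ᵥ (fun j => algebraMap K L (c j)) = 0 := by
  simp only [funext_iff, Prod.forall, extM_mulVec_apply, Pi.zero_apply]
  refine forall_congr' fun i => ?_
  rw [← LinearEquiv.map_eq_zero_iff γ.repr, Finsupp.ext_iff]
  rfl

theorem span_row_le_span_row_map_of_span_extM_le {ι κ : Type} (E : Matrix ι (Fin n) L)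
    (B : Matrix κ (Fin n) K) (h : span K (range (extM γ E)) ≤ span K (range B)) :
    span L (range E) ≤ span L (range (B.map (algebraMap K L))) := by
  have hmap : span K (range (extM γ E)) ≤ Submodule.comap
      ((Algebra.linearMap K L).compLeft (Fin n))
      ((span L (range (B.map (algebraMap K L)))).restrictScalars K) := by
    refine h.trans ?_
    rw [span_le]
    rintro _ ⟨r, rfl⟩
    exact subset_span ⟨r, rfl⟩
  rw [span_le]
  rintro _ ⟨r, rfl⟩
  have hE : E r = ∑ s, γ s • fun j => algebraMap K L (extM γ E (r, s) j) := by
    ext j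
    simp [extM, Finset.sum_apply, mul_comm, ← Algebra.smul_def, γ.sum_repr]
  rw [SetLike.mem_coe, hE]
  exact sum_mem fun s _ => smul_mem _ _ (hmap (subset_span ⟨(r, s), rfl⟩))

theorem span_row_map_eq_span_row_of_span_eq_span_extM {ι : Type} [Fintype ι] {t : ℕ}
    (E : Matrix ι (Fin n) L) (B : Matrix (Fin t) (Fin n) K)
    (h : span K (range B) = span K (range (extM γ E))) (hE : E.rank = t) :
    span L (range (B.map (algebraMap K L))) = span L (range E) := by
  have hle := span_row_le_span_row_map_of_span_extM_le γ E B h.ge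
  refine (Submodule.eq_of_le_of_finrank_le hle ?_).symm
  have hErow : E.rank = Module.finrank L (span L (range E)) := E.rank_eq_finrank_span_row
  have hBL := finrank_range_le_card (R := L) (B.map (algebraMap K L))
  rw [Fintype.card_fin] at hBL
  exact hBL.trans (hE ▸ hErow).le

end Expansion

theorem support_recovery_beyond_general {m n k ℓ t : ℕ} (K L : Type) [Field K]
    [Field L] [Algebra K L]
    (γ : Module.Basis (Fin m) K L)
    (H : Matrix (Fin (n - k)) (Fin n) L)
    (E : Matrix (Fin ℓ) (Fin n) L)
    (B : Matrix (Fin t) (Fin n) K)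
    (hBsupp : Submodule.span K (Set.range B) = Submodule.span K (Set.range (extM γ E)))
    (hEqm : E.rank = t)
    (hcond : ∀ b : Fin n → K, b ∉ Submodule.span K (Set.range B) →
      (H * (Matrix.of fun (j : Fin n) (s : Fin t ⊕ Unit) =>
        Sum.elim (fun s' => algebraMap K L (B s' j)) (fun _ => algebraMap K L (b j)) s)).rank
        = t + 1)
    (P : Matrix (Fin (n - k)) (Fin (n - k)) L) (hP : IsUnit P)
    (hech : _root_.IsRowEchelon (P * (H * Eᵀ))) :
    Submodule.span K
        (Set.range (extM γ (Matrix.of fun (i : {i : Fin (n - k) // (P * (H * Eᵀ)) i = 0}) j =>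
          (P * H) i.1 j))) = LinearMap.ker B.mulVecLin := by
  classical
  set S := P * (H * Eᵀ)
  set Hsub := of fun (i : {i // S i = 0}) j => (P * H) i.1 j
  have hBL : ∀ r, B.map (algebraMap K L) r ∈ span L (range E) := fun r =>
    span_row_map_eq_span_row_of_span_eq_span_extM γ E B hBsupp hEqm ▸ subset_span ⟨r, rfl⟩
  have hzero : ∀ i, S i = 0 → ∀ w ∈ span L (range E), (P * H) i ⬝ᵥ w = 0 := fun i hi _ =>
    dotProduct_eq_zero_of_mem_span_row <| by
      rwa [← vecMul_transpose, ← mul_apply_eq_vecMul, Matrix.mul_assoc]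
  have hle : span K (range (extM γ Hsub)) ≤ LinearMap.ker B.mulVecLin :=
    span_row_le_ker_mulVecLin fun r =>
      (extM_mulVec_eq_zero_iff γ _ (B r)).mpr <| funext fun i => hzero i.1 i.2 _ (hBL r)
  refine hle.eq_of_not_lt fun hlt => ?_
  obtain ⟨b, hb, hbB⟩ := exists_mulVec_eq_zero_notMem_span_row hlt
  rw [extM_mulVec_eq_zero_iff] at hb
  have hrank := hcond b hbB
  set G : Matrix (Fin n) (Fin t ⊕ Unit) L := of fun j s =>
    Sum.elim (fun s' => algebraMap K L (B s' j)) (fun _ => algebraMap K L (b j)) s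
  rw [← rank_mul_eq_right_of_isUnit_det P _ ((isUnit_iff_isUnit_det P).mp hP)] at hrank
  have hrows : ∀ i, S i = 0 → (P * (H * G)) i = 0 := by
    intro i hi
    rw [← Matrix.mul_assoc]
    ext (r | _)
    · simpa [G, mul_apply, dotProduct] using hzero i hi _ (hBL r)
    · simpa [G, Hsub, mul_apply, mulVec, dotProduct] using congrFun hb ⟨i, hi⟩
  have hS : S.rank ≤ t :=
    hEqm ▸ E.rank_transpose ▸ (rank_mul_le_right _ _).trans (rank_mul_le_right _ _)
  have := (isRowEchelon_iff_matrix_isRowEchelon.mp hech).rank_le_of_row_eq_zero hrows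
  omega

/-- beyond `d-2`: let `H` be a full-rank parity-check matrix of a linear
`[n,k]` rank-metric code over `F_{q^m}`, `E ∈ F_{q^m}^{ℓ×n}` with rank support basis matrix
`B ∈ F_q^{t×n}` and `rank_{F_{q^m}}(E) = t`. If for every `b ∈ F_q^n` outside the `F_q`-row
space of `B` the matrix `H·[Bᵀ | bᵀ]` has `F_{q^m}`-rank `t+1`, then the `F_q`-row space of
`ext_γ(H_sub)` equals `ker_{F_q}(B)`, where `H_sub` consists of the rows of `P·H`
corresponding to the zero rows of the row echelon form `P·S` of `S = H·Eᵀ`. -/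
theorem support_recovery_beyond {q m n k ℓ t : ℕ} (K L : Type) [Field K] [Fintype K]
    [Field L] [Fintype L] [Algebra K L] (hK : Fintype.card K = q) (hL : Fintype.card L = q ^ m)
    (γ : Module.Basis (Fin m) K L)
    (H : Matrix (Fin (n - k)) (Fin n) L) (hH : H.rank = n - k)
    (E : Matrix (Fin ℓ) (Fin n) L)
    (B : Matrix (Fin t) (Fin n) K) (hBrk : B.rank = t)
    (hBsupp : Submodule.span K (Set.range B) = Submodule.span K (Set.range (extM γ E)))
    (hEqm : E.rank = t)
    (hcond : ∀ b : Fin n → K, b ∉ Submodule.span K (Set.range B) →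
      (H * (Matrix.of fun (j : Fin n) (s : Fin t ⊕ Unit) =>
        Sum.elim (fun s' => algebraMap K L (B s' j)) (fun _ => algebraMap K L (b j)) s)).rank
        = t + 1)
    (P : Matrix (Fin (n - k)) (Fin (n - k)) L) (hP : IsUnit P)
    (hech : _root_.IsRowEchelon (P * (H * Eᵀ))) :
    Submodule.span K
        (Set.range (extM γ (Matrix.of fun (i : {i : Fin (n - k) // (P * (H * Eᵀ)) i = 0}) j =>
          (P * H) i.1 j))) = LinearMap.ker B.mulVecLin :=
  support_recovery_beyond_general K L γ H E B hBsupp hEqm hcond P hP hech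
end
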